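/- arXiv:2012.10982 — 3 statements merged into one kernel-verified Lean document; each statement's English description precedes it below -/
import Mathlib

section
/- (Exchange of M22·M12⁻¹·M11 with a second copy of M11.) Under the exchange relation for the block matrix M and invertibility of M12, setting G := M22·N·M11 (an n₂×n₁ matrix), one has (G ⊠ M11)·R̄_{n₁} = (G ⊠' M11) − (q−q⁻¹)·(M21 ⊠ M11)·P_{n₁}. -/
open Matrix

variable {A : Type*} [Ring A]

/-- Kulish–Sklyanin trigonometric R-matrix with deformation parameter `q`
(`qi` denotes the inverse of `q`). -/
def Rmat (A : Type*) [Ring A] (q qi : A) (n : ℕ) :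
    Matrix (Fin n × Fin n) (Fin n × Fin n) A := fun x y =>
  if x.1 = x.2 ∧ x.2 = y.1 ∧ y.1 = y.2 then q
  else if x.1 = y.1 ∧ x.2 = y.2 then 1
  else if x.1 = y.2 ∧ x.2 = y.1 ∧ x.2 < x.1 then q - qi
  else 0

/-- Permutation-type matrix with (possibly) rectangular tensor indices. -/
def PmatG (A : Type*) [Ring A] (m n : ℕ) :
    Matrix (Fin m × Fin n) (Fin n × Fin m) A := fun x y =>
  if x.1 = y.2 ∧ x.2 = y.1 then 1 else 0

/-- The permutation matrix `P`. -/
def Pmat (A : Type*) [Ring A] (n : ℕ) :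
    Matrix (Fin n × Fin n) (Fin n × Fin n) A := PmatG A n n

/-- Kronecker product `X ⊠ Y` : entry at `((i,a),(j,b))` is `X i j * Y a b`. -/
def kron {I J K L : Type*} (X : Matrix I J A) (Y : Matrix K L A) :
    Matrix (I × K) (J × L) A := fun p r => X p.1 r.1 * Y p.2 r.2

/-- Opposite-order Kronecker product `X ⊠' Y` : entry at `((i,a),(j,b))` is `Y a b * X i j`. -/
def kron' {I J K L : Type*} (X : Matrix I J A) (Y : Matrix K L A) :
    Matrix (I × K) (J × L) A := fun p r => Y p.2 r.2 * X p.1 r.1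

/-! ### Auxiliary lemmas -/

section Aux

lemma rmat_row {n : ℕ} (q qi : A) (x : Fin n × Fin n) (f : Fin n × Fin n → A) :
    ∑ z, Rmat A q qi n x z * f z =
      (if x.1 = x.2 then q else 1) * f x +
        (if x.2 < x.1 then (q - qi) * f (x.2, x.1) else 0) := by
  have key : ∀ z, Rmat A q qi n x z * f z =
      (if z = x then (if x.1 = x.2 then q else 1) * f z else 0) +
        (if z = (x.2, x.1) then (if x.2 < x.1 then (q - qi) * f z else 0) else 0) := by
    intro z
    obtain ⟨x1, x2⟩ := x
    obtain ⟨z1, z2⟩ := z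
    simp only [Rmat, Prod.mk.injEq]
    split_ifs <;>
      simp only [Fin.lt_def, Fin.ext_iff, Prod.ext_iff, not_and, not_lt, add_zero, zero_add,
        mul_zero, zero_mul] at * <;>
      first | rfl | (exfalso; omega)
  rw [Finset.sum_congr rfl (fun z _ => key z), Finset.sum_add_distrib,
    Finset.sum_ite_eq' _ x, Finset.sum_ite_eq' _ (x.2, x.1)]
  simp

lemma rmat_col {n : ℕ} (q qi : A) (y : Fin n × Fin n) (f : Fin n × Fin n → A) :
    ∑ w, f w * Rmat A q qi n w y =
      f y * (if y.1 = y.2 then q else 1) +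
        (if y.1 < y.2 then f (y.2, y.1) * (q - qi) else 0) := by
  have key : ∀ w, f w * Rmat A q qi n w y =
      (if w = y then f w * (if y.1 = y.2 then q else 1) else 0) +
        (if w = (y.2, y.1) then (if y.1 < y.2 then f w * (q - qi) else 0) else 0) := by
    intro w
    obtain ⟨y1, y2⟩ := y
    obtain ⟨w1, w2⟩ := w
    simp only [Rmat, Prod.mk.injEq]
    split_ifs <;>
      simp only [Fin.lt_def, Fin.ext_iff, Prod.ext_iff, not_and, not_lt, add_zero, zero_add,
        mul_zero, zero_mul] at * <;>
      first | rfl | (exfalso; omega)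
  rw [Finset.sum_congr rfl (fun w _ => key w), Finset.sum_add_distrib,
    Finset.sum_ite_eq' _ y, Finset.sum_ite_eq' _ (y.2, y.1)]
  simp

lemma rmat_mul_rmat {n : ℕ} (q qi : A) (hqinv : q * qi = 1) :
    Rmat A q qi n * Rmat A qi q n = 1 := by
  funext x y
  rw [Matrix.mul_apply, rmat_row]
  obtain ⟨x1, x2⟩ := x
  obtain ⟨y1, y2⟩ := y
  simp only [Rmat, Matrix.one_apply, Prod.mk.injEq]
  split_ifs <;>
    simp only [Fin.lt_def, Fin.ext_iff, Prod.ext_iff, not_and, not_lt, add_zero, zero_add,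
      mul_zero, zero_mul, mul_one, one_mul] at * <;>
    first
      | rfl
      | exact hqinv
      | (exfalso; omega)
      | abel

lemma kron_mul_kron {I J K L J' L' : Type*} [Fintype J] [Fintype L]
    (X : Matrix I J A) (Y : Matrix K L A) (Z : Matrix J J' A) (W : Matrix L L' A)
    (h : ∀ a b c d, Commute (Y a b) (Z c d)) :
    kron X Y * kron Z W = kron (X * Z) (Y * W) := by
  funext p r
  show ∑ z : J × L, (X p.1 z.1 * Y p.2 z.2) * (Z z.1 r.1 * W z.2 r.2)
      = (∑ j, X p.1 j * Z j r.1) * (∑ l, Y p.2 l * W l r.2)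
  rw [Finset.sum_mul_sum, Fintype.sum_prod_type]
  refine Finset.sum_congr rfl fun j _ => Finset.sum_congr rfl fun l _ => ?_
  rw [mul_assoc, mul_assoc, ← mul_assoc (Y p.2 l), (h p.2 l j r.1).eq, mul_assoc]

lemma kron'_mul_kron' {I J K L J' L' : Type*} [Fintype J] [Fintype L]
    (X : Matrix I J A) (Y : Matrix K L A) (Z : Matrix J J' A) (W : Matrix L L' A)
    (h : ∀ a b c d, Commute (X a b) (W c d)) :
    kron' X Y * kron' Z W = kron' (X * Z) (Y * W) := by
  funext p r
  show ∑ z : J × L, (Y p.2 z.2 * X p.1 z.1) * (W z.2 r.2 * Z z.1 r.1)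
      = (∑ l, Y p.2 l * W l r.2) * (∑ j, X p.1 j * Z j r.1)
  rw [Finset.sum_mul_sum, Fintype.sum_prod_type]
  rw [Finset.sum_comm]
  refine Finset.sum_congr rfl fun l _ => Finset.sum_congr rfl fun j _ => ?_
  rw [mul_assoc, mul_assoc, ← mul_assoc (X p.1 j), (h p.1 j l r.2).eq, mul_assoc]

lemma kron'_one_right {I J K : Type*} [DecidableEq K] (X : Matrix I J A) :
    kron' X (1 : Matrix K K A) = kron X (1 : Matrix K K A) := by
  funext p r
  simp only [kron, kron', Matrix.one_apply]
  split_ifs <;> simp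

lemma kron'_one_left {I J K : Type*} [DecidableEq K] (X : Matrix I J A) :
    kron' (1 : Matrix K K A) X = kron (1 : Matrix K K A) X := by
  funext p r
  simp only [kron, kron', Matrix.one_apply]
  split_ifs <;> simp

lemma kron_mul_kron_one {I J K L J' : Type*} [Fintype J] [Fintype L] [Fintype K]
    [DecidableEq L] [DecidableEq K] (X : Matrix I J A) (Y : Matrix K L A) (Z : Matrix J J' A) :
    kron X Y * kron Z (1 : Matrix L L A) = kron X (1 : Matrix K K A) * kron' Z Y := by
  funext p r
  show ∑ z : J × L, (X p.1 z.1 * Y p.2 z.2) * (Z z.1 r.1 * (1 : Matrix L L A) z.2 r.2)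
      = ∑ z : J × K, (X p.1 z.1 * (1 : Matrix K K A) p.2 z.2) * (Y z.2 r.2 * Z z.1 r.1)
  simp only [Fintype.sum_prod_type, Matrix.one_apply, mul_ite, ite_mul, mul_one, mul_zero,
    zero_mul, one_mul, Finset.sum_ite_eq, Finset.sum_ite_eq', Finset.mem_univ, if_true]
  exact Finset.sum_congr rfl fun j _ => (mul_assoc _ _ _)

lemma kron_one_mul_kron {I J K L : Type*} [Fintype I] [Fintype L] [DecidableEq I]
    [DecidableEq L] (X : Matrix I J A) (Y : Matrix K L A) :
    kron (1 : Matrix I I A) Y * kron X (1 : Matrix L L A) = kron' X Y := by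
  funext p r
  show ∑ z : I × L, ((1 : Matrix I I A) p.1 z.1 * Y p.2 z.2) * (X z.1 r.1 * (1 : Matrix L L A) z.2 r.2)
      = Y p.2 r.2 * X p.1 r.1
  simp only [Fintype.sum_prod_type, Matrix.one_apply, mul_ite, ite_mul, mul_one, mul_zero,
    zero_mul, one_mul, Finset.sum_ite_eq, Finset.sum_ite_eq', Finset.mem_univ, if_true]

lemma kron_one_mul_one_kron {I J K L : Type*} [Fintype J] [Fintype K] [DecidableEq J]
    [DecidableEq K] (X : Matrix I J A) (Y : Matrix K L A) :
    kron X (1 : Matrix K K A) * kron (1 : Matrix J J A) Y = kron X Y := by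
  funext p r
  show ∑ z : J × K, (X p.1 z.1 * (1 : Matrix K K A) p.2 z.2) *
        ((1 : Matrix J J A) z.1 r.1 * Y z.2 r.2)
      = X p.1 r.1 * Y p.2 r.2
  rw [Fintype.sum_prod_type, Finset.sum_comm]
  simp only [Matrix.one_apply, mul_ite, ite_mul, mul_one, mul_zero,
    zero_mul, one_mul, Finset.sum_ite_eq, Finset.sum_ite_eq', Finset.mem_univ, if_true]

lemma mul_pmatG {I : Type*} {a b : ℕ} (X : Matrix I (Fin a × Fin b) A)
    (p : I) (y : Fin b × Fin a) :
    (X * PmatG A a b) p y = X p (y.2, y.1) := by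
  have : ∀ w : Fin a × Fin b, PmatG A a b w y = if w = (y.2, y.1) then 1 else 0 := by
    intro w; simp [PmatG, Prod.ext_iff]
  rw [Matrix.mul_apply]
  simp only [this, mul_ite, mul_one, mul_zero, Finset.sum_ite_eq', Finset.mem_univ, if_true]

lemma pmatG_mul_kron {a b a' b' : ℕ} (X : Matrix (Fin b) (Fin b') A)
    (Y : Matrix (Fin a) (Fin a') A) :
    PmatG A a b * kron X Y = kron' Y X * PmatG A a' b' := by
  funext p r
  have h1 : ∀ w : Fin b × Fin a, PmatG A a b p w = if w = (p.2, p.1) then 1 else 0 := by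
    intro w; simp [PmatG, Prod.ext_iff, and_comm, eq_comm]
  rw [Matrix.mul_apply]
  simp only [h1, ite_mul, one_mul, zero_mul, Finset.sum_ite_eq', Finset.mem_univ, if_true]
  rw [mul_pmatG]
  rfl

lemma one_entry_commute {K : Type*} [DecidableEq K] (a b : K) (x : A) :
    Commute ((1 : Matrix K K A) a b) x := by
  rw [Matrix.one_apply]
  split_ifs
  · exact Commute.one_left x
  · exact Commute.zero_left x

end Aux

section FinAux

lemma castAdd_lt_castAdd_iff {n k : ℕ} {a b : Fin n} :
    Fin.castAdd k a < Fin.castAdd k b ↔ a < b := by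
  rw [Fin.lt_def, Fin.lt_def, Fin.coe_castAdd, Fin.coe_castAdd]

lemma castAdd_lt_natAdd {n k : ℕ} (a : Fin n) (b : Fin k) :
    Fin.castAdd k a < Fin.natAdd n b := by
  have := a.isLt; rw [Fin.lt_def, Fin.coe_castAdd, Fin.coe_natAdd]; omega

lemma not_natAdd_lt_castAdd {n k : ℕ} (a : Fin n) (b : Fin k) :
    ¬ Fin.natAdd n b < Fin.castAdd k a := by
  have := a.isLt; rw [Fin.lt_def, Fin.coe_castAdd, Fin.coe_natAdd]; omega

lemma castAdd_ne_natAdd {n k : ℕ} (a : Fin n) (b : Fin k) :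
    Fin.castAdd k a ≠ Fin.natAdd n b := by
  have := a.isLt
  rw [Fin.ne_iff_vne, Fin.coe_castAdd, Fin.coe_natAdd]; omega

lemma natAdd_ne_castAdd {n k : ℕ} (a : Fin n) (b : Fin k) :
    Fin.natAdd n b ≠ Fin.castAdd k a := (castAdd_ne_natAdd a b).symm

end FinAux


/-- exchange of `G = M22·M12⁻¹·M11` with a second copy of `M11`:
`(G ⊠ M11)·R̄_{n₁} = (G ⊠' M11) − (q−q⁻¹)·(M21 ⊠ M11)·P_{n₁}`. -/
theorem stmt15 (q qi : A) (hq : ∀ a : A, Commute q a) (hqi : ∀ a : A, Commute qi a)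
    (hqinv : q * qi = 1) (hqinv' : qi * q = 1)
    (m n₁ n₂ : ℕ) (hm : 1 ≤ m) (hn₁ : 1 ≤ n₁) (hn₂ : 1 ≤ n₂)
    (M11 : Matrix (Fin m) (Fin n₁) A) (M12 : Matrix (Fin m) (Fin m) A)
    (M21 : Matrix (Fin n₂) (Fin n₁) A) (M22 : Matrix (Fin n₂) (Fin m) A)
    (hex : Rmat A q qi (m + n₂) *
        kron (Matrix.reindex finSumFinEquiv finSumFinEquiv (fromBlocks M11 M12 M21 M22))
          (Matrix.reindex finSumFinEquiv finSumFinEquiv (fromBlocks M11 M12 M21 M22)) =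
      kron' (Matrix.reindex finSumFinEquiv finSumFinEquiv (fromBlocks M11 M12 M21 M22))
          (Matrix.reindex finSumFinEquiv finSumFinEquiv (fromBlocks M11 M12 M21 M22)) *
        Rmat A q qi (n₁ + m))
    (N : Matrix (Fin m) (Fin m) A) (hN : M12 * N = 1) (hN' : N * M12 = 1) :
    kron (M22 * N * M11) M11 * Rmat A qi q n₁ =
      kron' (M22 * N * M11) M11 - (q - qi) • (kron M21 M11 * Pmat A n₁) := by
  -- T1 : R_m · (M12 ⊠ M11) = M12 ⊠' M11
  have hT1 : Rmat A q qi m * kron M12 M11 = kron' M12 M11 := by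
    funext p y
    obtain ⟨a', a⟩ := p
    obtain ⟨b', j⟩ := y
    have hx := congr_fun (congr_fun hex
        (finSumFinEquiv (Sum.inl a'), finSumFinEquiv (Sum.inl a)))
      (finSumFinEquiv (Sum.inr b'), finSumFinEquiv (Sum.inl j))
    rw [Matrix.mul_apply, Matrix.mul_apply, rmat_row, rmat_col] at hx
    simp only [kron, kron', finSumFinEquiv_apply_left, finSumFinEquiv_apply_right,
      Matrix.reindex_apply, Matrix.submatrix_apply, finSumFinEquiv_symm_apply_castAdd,
      finSumFinEquiv_symm_apply_natAdd, Matrix.fromBlocks_apply₁₁, Matrix.fromBlocks_apply₁₂,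
      Matrix.fromBlocks_apply₂₁, Matrix.fromBlocks_apply₂₂, Fin.castAdd_inj,
      castAdd_lt_castAdd_iff, castAdd_lt_natAdd, not_natAdd_lt_castAdd, castAdd_ne_natAdd,
      natAdd_ne_castAdd, if_false, if_true, mul_one, mul_zero, zero_mul, one_mul,
      add_zero, zero_add] at hx
    rw [Matrix.mul_apply, rmat_row]
    simpa [kron, kron'] using hx
  -- T0 : R_m · (M11 ⊠ M11) = (M11 ⊠' M11) · R_{n₁}
  have hT0 : Rmat A q qi m * kron M11 M11 = kron' M11 M11 * Rmat A q qi n₁ := by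
    funext p y
    obtain ⟨a', a⟩ := p
    obtain ⟨j, b⟩ := y
    have hx := congr_fun (congr_fun hex
        (finSumFinEquiv (Sum.inl a'), finSumFinEquiv (Sum.inl a)))
      (finSumFinEquiv (Sum.inl j), finSumFinEquiv (Sum.inl b))
    rw [Matrix.mul_apply, Matrix.mul_apply, rmat_row, rmat_col] at hx
    simp only [kron, kron', finSumFinEquiv_apply_left, finSumFinEquiv_apply_right,
      Matrix.reindex_apply, Matrix.submatrix_apply, finSumFinEquiv_symm_apply_castAdd,
      finSumFinEquiv_symm_apply_natAdd, Matrix.fromBlocks_apply₁₁, Matrix.fromBlocks_apply₁₂,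
      Matrix.fromBlocks_apply₂₁, Matrix.fromBlocks_apply₂₂, Fin.castAdd_inj,
      castAdd_lt_castAdd_iff, castAdd_lt_natAdd, not_natAdd_lt_castAdd, castAdd_ne_natAdd,
      natAdd_ne_castAdd, if_false, if_true, mul_one, mul_zero, zero_mul, one_mul,
      add_zero, zero_add] at hx
    rw [Matrix.mul_apply, rmat_row, Matrix.mul_apply, rmat_col]
    simpa [kron, kron'] using hx
  -- entries of M21 commute with entries of M12
  have hCsc : ∀ (i : Fin n₂) (j : Fin n₁) (a b : Fin m),
      M21 i j * M12 a b = M12 a b * M21 i j := by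
    intro i j a b
    have hx := congr_fun (congr_fun hex
        (finSumFinEquiv (Sum.inr i), finSumFinEquiv (Sum.inl a)))
      (finSumFinEquiv (Sum.inl j), finSumFinEquiv (Sum.inr b))
    rw [Matrix.mul_apply, Matrix.mul_apply, rmat_row, rmat_col] at hx
    simp only [kron, kron', finSumFinEquiv_apply_left, finSumFinEquiv_apply_right,
      Matrix.reindex_apply, Matrix.submatrix_apply, finSumFinEquiv_symm_apply_castAdd,
      finSumFinEquiv_symm_apply_natAdd, Matrix.fromBlocks_apply₁₁, Matrix.fromBlocks_apply₁₂,
      Matrix.fromBlocks_apply₂₁, Matrix.fromBlocks_apply₂₂, Fin.castAdd_inj,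
      castAdd_lt_castAdd_iff, castAdd_lt_natAdd, not_natAdd_lt_castAdd, castAdd_ne_natAdd,
      natAdd_ne_castAdd, if_false, if_true, mul_one, mul_zero, zero_mul, one_mul,
      add_zero, zero_add] at hx
    rw [((hq (M11 a j * M22 i b)).sub_left (hqi (M11 a j * M22 i b))).eq] at hx
    exact add_right_cancel hx
  -- the exchange relation between M22, M11, M12, M21
  have hR2 : ∀ (i : Fin n₂) (a b : Fin m) (j : Fin n₁),
      M22 i b * M11 a j + (q - qi) * (M12 a b * M21 i j) = M11 a j * M22 i b := by
    intro i a b j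
    have hx := congr_fun (congr_fun hex
        (finSumFinEquiv (Sum.inr i), finSumFinEquiv (Sum.inl a)))
      (finSumFinEquiv (Sum.inr b), finSumFinEquiv (Sum.inl j))
    rw [Matrix.mul_apply, Matrix.mul_apply, rmat_row, rmat_col] at hx
    simpa only [kron, kron', finSumFinEquiv_apply_left, finSumFinEquiv_apply_right,
      Matrix.reindex_apply, Matrix.submatrix_apply, finSumFinEquiv_symm_apply_castAdd,
      finSumFinEquiv_symm_apply_natAdd, Matrix.fromBlocks_apply₁₁, Matrix.fromBlocks_apply₁₂,
      Matrix.fromBlocks_apply₂₁, Matrix.fromBlocks_apply₂₂, Fin.castAdd_inj,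
      castAdd_lt_castAdd_iff, castAdd_lt_natAdd, not_natAdd_lt_castAdd, castAdd_ne_natAdd,
      natAdd_ne_castAdd, if_false, if_true, mul_one, mul_zero, zero_mul, one_mul,
      add_zero, zero_add] using hx
  -- entries of M21 commute with entries of N
  -- entries of M21 commute with entries of N
  have hCN : ∀ (i : Fin n₂) (j : Fin n₁) (c d : Fin m),
      Commute (M21 i j) (N c d) := by
    intro i j c d
    set t := M21 i j with ht
    have h1 : M12 * (t • (1 : Matrix (Fin m) (Fin m) A)) =
        (t • (1 : Matrix (Fin m) (Fin m) A)) * M12 := by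
      funext c' d'
      rw [Matrix.smul_mul, Matrix.one_mul, Matrix.smul_apply, smul_eq_mul]
      rw [Matrix.mul_apply]
      simp only [Matrix.smul_apply, Matrix.one_apply, smul_eq_mul, mul_ite, ite_mul, mul_one,
        mul_zero, Finset.sum_ite_eq', Finset.mem_univ, if_true]
      exact (hCsc i j c' d').symm
    have h2 : N * (t • (1 : Matrix (Fin m) (Fin m) A)) =
        (t • (1 : Matrix (Fin m) (Fin m) A)) * N := by
      calc N * (t • (1 : Matrix (Fin m) (Fin m) A))
          = N * ((t • (1 : Matrix (Fin m) (Fin m) A)) * (M12 * N)) := by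
            rw [hN, Matrix.mul_one]
        _ = N * (((t • (1 : Matrix (Fin m) (Fin m) A)) * M12) * N) := by
            rw [Matrix.mul_assoc]
        _ = N * ((M12 * (t • (1 : Matrix (Fin m) (Fin m) A))) * N) := by rw [h1]
        _ = (N * M12) * ((t • (1 : Matrix (Fin m) (Fin m) A)) * N) := by
            rw [Matrix.mul_assoc M12, ← Matrix.mul_assoc N M12]
        _ = (t • (1 : Matrix (Fin m) (Fin m) A)) * N := by rw [hN', Matrix.one_mul]
    have h3 := congr_fun (congr_fun h2 c) d
    rw [Matrix.smul_mul, Matrix.one_mul] at h3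
    rw [Matrix.mul_apply] at h3
    simp only [Matrix.smul_apply, Matrix.one_apply, smul_eq_mul, mul_ite, ite_mul, mul_one,
      mul_zero, Finset.sum_ite_eq', Finset.mem_univ, if_true] at h3
    exact h3.symm
  -- R-matrix inverses
  have hRmq : Rmat A q qi m * Rmat A qi q m = 1 := rmat_mul_rmat q qi hqinv
  have hRmq' : Rmat A qi q m * Rmat A q qi m = 1 := rmat_mul_rmat qi q hqinv'
  have hRn : Rmat A q qi n₁ * Rmat A qi q n₁ = 1 := rmat_mul_rmat q qi hqinv
  -- matrix form of hR2
  have hR2mat : kron' M22 M11 =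
      kron M22 M11 + (q - qi) • (kron' M21 M12 * PmatG A n₁ m) := by
    funext p y
    obtain ⟨i, a⟩ := p
    obtain ⟨b, j⟩ := y
    simp only [Matrix.add_apply, Matrix.smul_apply, smul_eq_mul, mul_pmatG, kron, kron']
    exact (hR2 i a b j).symm
  -- the key commutation of M11 past N
  have hclub : kron' N M11 =
      kron N (1 : Matrix (Fin m) (Fin m) A) * Rmat A qi q m *
        kron (1 : Matrix (Fin m) (Fin m) A) M11 := by
    have h1 : kron M12 M11 = Rmat A qi q m * kron' M12 M11 := by
      rw [← hT1, ← Matrix.mul_assoc, hRmq', Matrix.one_mul]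
    have h2 : kron (1 : Matrix (Fin m) (Fin m) A) M11 =
        kron N (1 : Matrix (Fin m) (Fin m) A) * Rmat A qi q m * kron' M12 M11 := by
      rw [Matrix.mul_assoc, ← h1,
        kron_mul_kron N (1 : Matrix (Fin m) (Fin m) A) M12 M11
          (fun a b c d => one_entry_commute a b _), hN', Matrix.one_mul]
    have h3 : kron' M12 M11 * kron' N (1 : Matrix (Fin n₁) (Fin n₁) A) =
        kron (1 : Matrix (Fin m) (Fin m) A) M11 := by
      rw [kron'_mul_kron' M12 M11 N (1 : Matrix (Fin n₁) (Fin n₁) A)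
        (fun a b c d => (one_entry_commute c d _).symm), hN, Matrix.mul_one, kron'_one_left]
    have h4 : kron' ((1 : Matrix (Fin m) (Fin m) A) * N)
        (M11 * (1 : Matrix (Fin n₁) (Fin n₁) A)) = kron' N M11 := by
      rw [Matrix.one_mul, Matrix.mul_one]
    calc kron' N M11
        = kron' ((1 : Matrix (Fin m) (Fin m) A) * N)
            (M11 * (1 : Matrix (Fin n₁) (Fin n₁) A)) := h4.symm
      _ = kron' (1 : Matrix (Fin m) (Fin m) A) M11 *
            kron' N (1 : Matrix (Fin n₁) (Fin n₁) A) := by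
          rw [kron'_mul_kron' (1 : Matrix (Fin m) (Fin m) A) M11 N
            (1 : Matrix (Fin n₁) (Fin n₁) A) (fun a b c d => one_entry_commute a b _)]
      _ = kron (1 : Matrix (Fin m) (Fin m) A) M11 *
            kron' N (1 : Matrix (Fin n₁) (Fin n₁) A) := by rw [kron'_one_left]
      _ = kron N (1 : Matrix (Fin m) (Fin m) A) * Rmat A qi q m * kron' M12 M11 *
            kron' N (1 : Matrix (Fin n₁) (Fin n₁) A) := by rw [h2]
      _ = kron N (1 : Matrix (Fin m) (Fin m) A) * Rmat A qi q m *
            (kron' M12 M11 * kron' N (1 : Matrix (Fin n₁) (Fin n₁) A)) := by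
          rw [Matrix.mul_assoc]
      _ = kron N (1 : Matrix (Fin m) (Fin m) A) * Rmat A qi q m *
            kron (1 : Matrix (Fin m) (Fin m) A) M11 := by rw [h3]
  -- inverted form of hT0
  have hT0' : kron M11 M11 * Rmat A qi q n₁ = Rmat A qi q m * kron' M11 M11 := by
    calc kron M11 M11 * Rmat A qi q n₁
        = (Rmat A qi q m * Rmat A q qi m) * kron M11 M11 * Rmat A qi q n₁ := by
          rw [hRmq', Matrix.one_mul]
      _ = Rmat A qi q m * (Rmat A q qi m * kron M11 M11) * Rmat A qi q n₁ := by
          rw [Matrix.mul_assoc (Rmat A qi q m)]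
      _ = Rmat A qi q m * (kron' M11 M11 * Rmat A q qi n₁) * Rmat A qi q n₁ := by rw [hT0]
      _ = Rmat A qi q m * kron' M11 M11 * (Rmat A q qi n₁ * Rmat A qi q n₁) := by
          rw [Matrix.mul_assoc, Matrix.mul_assoc, Matrix.mul_assoc]
      _ = Rmat A qi q m * kron' M11 M11 := by rw [hRn, Matrix.mul_one]
  -- the left-hand side
  have hLHS : kron (M22 * N * M11) M11 * Rmat A qi q n₁ =
      kron M22 (1 : Matrix (Fin m) (Fin m) A) * kron' N M11 *
        kron M11 (1 : Matrix (Fin n₁) (Fin n₁) A) := by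
    have ea : kron M22 (1 : Matrix (Fin m) (Fin m) A) * kron N (1 : Matrix (Fin m) (Fin m) A)
        = kron (M22 * N) (1 : Matrix (Fin m) (Fin m) A) := by
      rw [kron_mul_kron M22 (1 : Matrix (Fin m) (Fin m) A) N (1 : Matrix (Fin m) (Fin m) A)
        (fun a b c d => one_entry_commute a b _), Matrix.one_mul]
    have eb : kron (M22 * N) (1 : Matrix (Fin m) (Fin m) A) * kron M11 M11
        = kron (M22 * N * M11) M11 := by
      rw [kron_mul_kron (M22 * N) (1 : Matrix (Fin m) (Fin m) A) M11 M11
        (fun a b c d => one_entry_commute a b _), Matrix.one_mul]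
    calc kron (M22 * N * M11) M11 * Rmat A qi q n₁
        = kron M22 (1 : Matrix (Fin m) (Fin m) A) * kron N (1 : Matrix (Fin m) (Fin m) A) *
            kron M11 M11 * Rmat A qi q n₁ := by rw [ea, eb]
      _ = kron M22 (1 : Matrix (Fin m) (Fin m) A) * kron N (1 : Matrix (Fin m) (Fin m) A) *
            (kron M11 M11 * Rmat A qi q n₁) := by rw [Matrix.mul_assoc]
      _ = kron M22 (1 : Matrix (Fin m) (Fin m) A) * kron N (1 : Matrix (Fin m) (Fin m) A) *
            (Rmat A qi q m * kron' M11 M11) := by rw [hT0']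
      _ = kron M22 (1 : Matrix (Fin m) (Fin m) A) * kron N (1 : Matrix (Fin m) (Fin m) A) *
            (Rmat A qi q m * (kron (1 : Matrix (Fin m) (Fin m) A) M11 *
              kron M11 (1 : Matrix (Fin n₁) (Fin n₁) A))) := by
          rw [kron_one_mul_kron M11 M11]
      _ = kron M22 (1 : Matrix (Fin m) (Fin m) A) * kron' N M11 *
            kron M11 (1 : Matrix (Fin n₁) (Fin n₁) A) := by
          rw [hclub]; simp only [Matrix.mul_assoc]
  -- the second term
  have hTerm2 : kron' M21 M12 * (PmatG A n₁ m * (kron N (1 : Matrix (Fin n₁) (Fin n₁) A) *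
      kron M11 (1 : Matrix (Fin n₁) (Fin n₁) A))) = kron M21 M11 * Pmat A n₁ := by
    calc kron' M21 M12 * (PmatG A n₁ m * (kron N (1 : Matrix (Fin n₁) (Fin n₁) A) *
        kron M11 (1 : Matrix (Fin n₁) (Fin n₁) A)))
        = kron' M21 M12 * ((PmatG A n₁ m * kron N (1 : Matrix (Fin n₁) (Fin n₁) A)) *
            kron M11 (1 : Matrix (Fin n₁) (Fin n₁) A)) := by rw [Matrix.mul_assoc]
      _ = kron' M21 M12 * ((kron' (1 : Matrix (Fin n₁) (Fin n₁) A) N * PmatG A n₁ m) *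
            kron M11 (1 : Matrix (Fin n₁) (Fin n₁) A)) := by
          rw [pmatG_mul_kron N (1 : Matrix (Fin n₁) (Fin n₁) A)]
      _ = kron' M21 M12 * (kron' (1 : Matrix (Fin n₁) (Fin n₁) A) N *
            (PmatG A n₁ m * kron M11 (1 : Matrix (Fin n₁) (Fin n₁) A))) := by
          rw [Matrix.mul_assoc]
      _ = kron' M21 M12 * (kron' (1 : Matrix (Fin n₁) (Fin n₁) A) N *
            (kron' (1 : Matrix (Fin n₁) (Fin n₁) A) M11 * PmatG A n₁ n₁)) := by
          rw [pmatG_mul_kron M11 (1 : Matrix (Fin n₁) (Fin n₁) A)]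
      _ = (kron' M21 M12 * kron' (1 : Matrix (Fin n₁) (Fin n₁) A) N) *
            (kron' (1 : Matrix (Fin n₁) (Fin n₁) A) M11 * PmatG A n₁ n₁) := by
          rw [Matrix.mul_assoc]
      _ = kron' (M21 * (1 : Matrix (Fin n₁) (Fin n₁) A)) (M12 * N) *
            (kron' (1 : Matrix (Fin n₁) (Fin n₁) A) M11 * PmatG A n₁ n₁) := by
          rw [kron'_mul_kron' M21 M12 (1 : Matrix (Fin n₁) (Fin n₁) A) N
            (fun a b c d => hCN a b c d)]
      _ = (kron' M21 (1 : Matrix (Fin m) (Fin m) A) *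
            kron' (1 : Matrix (Fin n₁) (Fin n₁) A) M11) * PmatG A n₁ n₁ := by
          rw [Matrix.mul_one, hN, Matrix.mul_assoc]
      _ = kron M21 M11 * Pmat A n₁ := by
          rw [kron'_one_right, kron'_one_left, kron_one_mul_one_kron]
          rfl
  -- the right-hand side
  have hRHS : kron' (M22 * N * M11) M11 =
      kron M22 (1 : Matrix (Fin m) (Fin m) A) * kron' N M11 *
        kron M11 (1 : Matrix (Fin n₁) (Fin n₁) A) +
        (q - qi) • (kron M21 M11 * Pmat A n₁) := by
    have ha : kron N (1 : Matrix (Fin n₁) (Fin n₁) A) *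
        kron M11 (1 : Matrix (Fin n₁) (Fin n₁) A) =
        kron (N * M11) (1 : Matrix (Fin n₁) (Fin n₁) A) := by
      rw [kron_mul_kron N (1 : Matrix (Fin n₁) (Fin n₁) A) M11
        (1 : Matrix (Fin n₁) (Fin n₁) A) (fun a b c d => one_entry_commute a b _),
        Matrix.one_mul]
    have e1 : kron' (M22 * N * M11) M11 = kron' M22 M11 *
        (kron N (1 : Matrix (Fin n₁) (Fin n₁) A) *
          kron M11 (1 : Matrix (Fin n₁) (Fin n₁) A)) := by
      calc kron' (M22 * N * M11) M11
          = kron' (M22 * (N * M11)) (M11 * (1 : Matrix (Fin n₁) (Fin n₁) A)) := by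
            rw [Matrix.mul_assoc, Matrix.mul_one]
        _ = kron' M22 M11 * kron' (N * M11) (1 : Matrix (Fin n₁) (Fin n₁) A) := by
            rw [kron'_mul_kron' M22 M11 (N * M11) (1 : Matrix (Fin n₁) (Fin n₁) A)
              (fun a b c d => (one_entry_commute c d _).symm)]
        _ = kron' M22 M11 * (kron N (1 : Matrix (Fin n₁) (Fin n₁) A) *
              kron M11 (1 : Matrix (Fin n₁) (Fin n₁) A)) := by
            rw [kron'_one_right, ha]
    calc kron' (M22 * N * M11) M11
        = kron' M22 M11 * (kron N (1 : Matrix (Fin n₁) (Fin n₁) A) *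
            kron M11 (1 : Matrix (Fin n₁) (Fin n₁) A)) := e1
      _ = (kron M22 M11 + (q - qi) • (kron' M21 M12 * PmatG A n₁ m)) *
            (kron N (1 : Matrix (Fin n₁) (Fin n₁) A) *
              kron M11 (1 : Matrix (Fin n₁) (Fin n₁) A)) := by rw [hR2mat]
      _ = kron M22 M11 * (kron N (1 : Matrix (Fin n₁) (Fin n₁) A) *
            kron M11 (1 : Matrix (Fin n₁) (Fin n₁) A)) +
          (q - qi) • ((kron' M21 M12 * PmatG A n₁ m) *
            (kron N (1 : Matrix (Fin n₁) (Fin n₁) A) *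
              kron M11 (1 : Matrix (Fin n₁) (Fin n₁) A))) := by
          rw [Matrix.add_mul, Matrix.smul_mul]
      _ = (kron M22 M11 * kron N (1 : Matrix (Fin n₁) (Fin n₁) A)) *
            kron M11 (1 : Matrix (Fin n₁) (Fin n₁) A) +
          (q - qi) • (kron' M21 M12 * (PmatG A n₁ m *
            (kron N (1 : Matrix (Fin n₁) (Fin n₁) A) *
              kron M11 (1 : Matrix (Fin n₁) (Fin n₁) A)))) := by
          rw [← Matrix.mul_assoc (kron M22 M11), Matrix.mul_assoc (kron' M21 M12)]
      _ = kron M22 (1 : Matrix (Fin m) (Fin m) A) * kron' N M11 *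
            kron M11 (1 : Matrix (Fin n₁) (Fin n₁) A) +
          (q - qi) • (kron M21 M11 * Pmat A n₁) := by
          rw [kron_mul_kron_one M22 M11 N, hTerm2]
  rw [hLHS, hRHS, add_sub_cancel_right]
end

section
/- (Partial transposes of spectral R-matrices commute with spectral R-matrices.) For every n ≥ 1 and all elements u, v, w, y of the center of A, writing R(u,v) := u·(R̄_n)ᵀ − v·R_n, one has (R(u,v))^{t1} · R(w,y) = R(w,y) · (R(u,v))^{t1}, where for a matrix Z indexed by Fin n × Fin n the partial transpose Z^{t1} is defined by Z^{t1}((i,a),(j,b)) = Z((j,a),(i,b)). -/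
open Matrix

variable {A : Type*} [Ring A]

/-- Partial transposition in the first tensor factor: `Z^{t1}((i,a),(j,b)) = Z((j,a),(i,b))`. -/
def ptrans {n : ℕ} (Z : Matrix (Fin n × Fin n) (Fin n × Fin n) A) :
    Matrix (Fin n × Fin n) (Fin n × Fin n) A := fun x y => Z (y.1, x.2) (x.1, y.2)

/-! `ksMatrix a b c d` connects an index pair `(i, j)` only with itself and with `(j, i)`; it is the
scalar `a` on the pairs `(i, i)`. Its partial transpose connects the pairs `(i, i)` only among
themselves and is the scalar `b` on the pairs `(i, j)` with `i ≠ j`. With respect to the splitting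
into diagonal and off-diagonal index pairs, `ptrans (ksMatrix a b c d)` and `ksMatrix a' b' c' d'`
are therefore block diagonal, and in each block one of the two is a central scalar (`a'` resp. `b`).
Both `R_n` and the transpose of `R̄_n`, hence every `R(u,v)`, have this shape. -/

def ksMatrix {M : Type*} [Zero M] (a b c d : M) (n : ℕ) :
    Matrix (Fin n × Fin n) (Fin n × Fin n) M := fun x y =>
  if x.1 = x.2 ∧ x.2 = y.1 ∧ y.1 = y.2 then a
  else if x.1 = y.1 ∧ x.2 = y.2 then b
  else if x.1 = y.2 ∧ x.2 = y.1 ∧ x.2 < x.1 then c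
  else if x.1 = y.2 ∧ x.2 = y.1 then d
  else 0

section ksMatrix

variable {M : Type*} [Zero M] {a b c d : M} {n : ℕ} {x k : Fin n × Fin n}

lemma ksMatrix_apply_diag_left (hx : x.1 = x.2) :
    ksMatrix a b c d n x k = if k = x then a else 0 := by
  grind [ksMatrix]

lemma ksMatrix_apply_diag_right (hx : x.1 = x.2) :
    ksMatrix a b c d n k x = if k = x then a else 0 := by
  grind [ksMatrix]

lemma ksMatrix_apply_offDiag_diag (hx : x.1 ≠ x.2) (hk : k.1 = k.2) :
    ksMatrix a b c d n x k = 0 := by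
  grind [ksMatrix]

lemma ksMatrix_apply_diag_offDiag (hx : x.1 ≠ x.2) (hk : k.1 = k.2) :
    ksMatrix a b c d n k x = 0 := by
  grind [ksMatrix]

end ksMatrix

theorem smul_ksMatrix {R M : Type*} [Zero M] [SMulZeroClass R M] (r : R) (a b c d : M) (n : ℕ) :
    r • ksMatrix a b c d n = ksMatrix (r • a) (r • b) (r • c) (r • d) n := by
  ext x y
  rw [Matrix.smul_apply]
  simp only [ksMatrix, smul_ite, smul_zero]

theorem ksMatrix_sub_ksMatrix {M : Type*} [AddGroup M] (a b c d a' b' c' d' : M) (n : ℕ) :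
    ksMatrix a b c d n - ksMatrix a' b' c' d' n = ksMatrix (a - a') (b - b') (c - c') (d - d') n := by
  ext x y
  rw [Matrix.sub_apply]
  simp only [ksMatrix]
  split_ifs <;> simp only [sub_self]

section ptrans

variable {n : ℕ}

lemma ptrans_ksMatrix_apply_offDiag_left {a b c d : A} {x k : Fin n × Fin n} (hx : x.1 ≠ x.2) :
    ptrans (ksMatrix a b c d n) x k = if k = x then b else 0 := by
  grind [ptrans, ksMatrix]

lemma ptrans_ksMatrix_apply_offDiag_right {a b c d : A} {x k : Fin n × Fin n} (hx : x.1 ≠ x.2) :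
    ptrans (ksMatrix a b c d n) k x = if k = x then b else 0 := by
  grind [ptrans, ksMatrix]

theorem ptrans_ksMatrix_mul_comm {a b c d a' b' c' d' : A}
    (hb : ∀ z, Commute b z) (ha' : ∀ z, Commute a' z) :
    ptrans (ksMatrix a b c d n) * ksMatrix a' b' c' d' n =
      ksMatrix a' b' c' d' n * ptrans (ksMatrix a b c d n) := by
  ext x z
  simp only [mul_apply]
  by_cases hz : z.1 = z.2
  · by_cases hx : x.1 = x.2
    · simp [ksMatrix_apply_diag_left hx, ksMatrix_apply_diag_right hz,
        (ha' _).eq]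
    · have hterm : ∀ k, ksMatrix a' b' c' d' n x k * ptrans (ksMatrix a b c d n) k z =
          ksMatrix a' b' c' d' n x k * if z = k then b else 0 := by
        intro k
        by_cases hk : k.1 = k.2
        · simp [ksMatrix_apply_offDiag_diag hx hk]
        · rw [ptrans_ksMatrix_apply_offDiag_left hk]
      simp [Finset.sum_congr rfl fun k _ => hterm k, ptrans_ksMatrix_apply_offDiag_left hx,
        (hb _).eq]
  · have hterm : ∀ k, ptrans (ksMatrix a b c d n) x k * ksMatrix a' b' c' d' n k z =
        (if x = k then b else 0) * ksMatrix a' b' c' d' n k z := by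
      intro k
      by_cases hk : k.1 = k.2
      · simp [ksMatrix_apply_diag_offDiag hz hk]
      · rw [ptrans_ksMatrix_apply_offDiag_right hk]
    simp [Finset.sum_congr rfl fun k _ => hterm k, ptrans_ksMatrix_apply_offDiag_right hz,
      (hb _).eq]

theorem Rmat_eq_ksMatrix (q qi : A) : Rmat A q qi n = ksMatrix q 1 (q - qi) 0 n := by
  ext x y
  grind [Rmat, ksMatrix]

theorem transpose_Rmat_eq_ksMatrix (q qi : A) :
    (Rmat A q qi n)ᵀ = ksMatrix q 1 0 (q - qi) n := by
  ext x y
  grind [Rmat, ksMatrix, transpose_apply]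

end ptrans

theorem stmt17_general (q qi : A) (hq : ∀ a : A, Commute q a) (hqi : ∀ a : A, Commute qi a)
    (n : ℕ) (u v w y : A)
    (hu : ∀ a : A, Commute u a) (hv : ∀ a : A, Commute v a)
    (hw : ∀ a : A, Commute w a) (hy : ∀ a : A, Commute y a) :
    ptrans (u • (Rmat A qi q n)ᵀ - v • Rmat A q qi n) *
        (w • (Rmat A qi q n)ᵀ - y • Rmat A q qi n) =
      (w • (Rmat A qi q n)ᵀ - y • Rmat A q qi n) *
        ptrans (u • (Rmat A qi q n)ᵀ - v • Rmat A q qi n) := by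
  rw [transpose_Rmat_eq_ksMatrix, Rmat_eq_ksMatrix]
  simp only [smul_ksMatrix, ksMatrix_sub_ksMatrix, smul_eq_mul, mul_one]
  exact ptrans_ksMatrix_mul_comm (fun a => (hu a).sub_left (hv a))
    fun a => ((hw a).mul_left (hqi a)).sub_left ((hy a).mul_left (hq a))

/-- partial transposes of spectral R-matrices `R(u,v) = u·(R̄_n)ᵀ − v·R_n`
commute with spectral R-matrices: `(R(u,v))^{t1}·R(w,y) = R(w,y)·(R(u,v))^{t1}`. -/
theorem stmt17 (q qi : A) (hq : ∀ a : A, Commute q a) (hqi : ∀ a : A, Commute qi a)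
    (hqinv : q * qi = 1) (hqinv' : qi * q = 1)
    (n : ℕ) (hn : 1 ≤ n) (u v w y : A)
    (hu : ∀ a : A, Commute u a) (hv : ∀ a : A, Commute v a)
    (hw : ∀ a : A, Commute w a) (hy : ∀ a : A, Commute y a) :
    ptrans (u • (Rmat A qi q n)ᵀ - v • Rmat A q qi n) *
        (w • (Rmat A qi q n)ᵀ - y • Rmat A q qi n) =
      (w • (Rmat A qi q n)ᵀ - y • Rmat A q qi n) *
        ptrans (u • (Rmat A qi q n)ᵀ - v • Rmat A q qi n) :=
  stmt17_general q qi hq hqi n u v w y hu hv hw hy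
end

section
/- (Unique solution of the counting recursion.) Let f : ℕ → ℕ → ℤ satisfy f r 1 = 1 for all r ≥ 1, f 1 p = 1 for all p ≥ 1, and f r (p+1) = f r p − f (r−1) p for all r ≥ 2 and p ≥ 1. Then for all r ≥ 1 and p ≥ 2: f r p = (−1)^(r−1) · Nat.choose (p−2) (r−1). In particular, f r p = 0 whenever 1 < p ≤ r. -/
/-- unique solution of the counting recursion
`f r (p+1) = f r p − f (r−1) p` with `f r 1 = 1` and `f 1 p = 1`:
`f r p = (−1)^(r−1)·((p−2) choose (r−1))` for `r ≥ 1`, `p ≥ 2`; in particular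
`f r p = 0` whenever `1 < p ≤ r`. -/
theorem stmt19 (f : ℕ → ℕ → ℤ)
    (h1 : ∀ r : ℕ, 1 ≤ r → f r 1 = 1)
    (h2 : ∀ p : ℕ, 1 ≤ p → f 1 p = 1)
    (h3 : ∀ r p : ℕ, 2 ≤ r → 1 ≤ p → f r (p + 1) = f r p - f (r - 1) p) :
    (∀ r p : ℕ, 1 ≤ r → 2 ≤ p →
      f r p = (-1) ^ (r - 1) * ((p - 2).choose (r - 1) : ℤ)) ∧
    (∀ r p : ℕ, 1 < p → p ≤ r → f r p = 0) := by
  have main : ∀ p r : ℕ, 1 ≤ r → 2 ≤ p →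
      f r p = (-1) ^ (r - 1) * ((p - 2).choose (r - 1) : ℤ) := by
    intro p
    induction p with
    | zero => intro r hr hp; omega
    | succ p ih =>
      intro r hr hp
      rcases Nat.lt_or_ge p 2 with hp2 | hp2
      · have hp1 : p = 1 := by omega
        subst hp1
        rcases Nat.lt_or_ge r 2 with h | h
        · have hr1 : r = 1 := by omega
          subst hr1; rw [h2 2 (by norm_num)]; simp
        · rw [h3 r 1 h (by norm_num), h1 r hr, h1 (r - 1) (by omega)]
          have hc : (0).choose (r - 1) = 0 := Nat.choose_eq_zero_of_lt (by omega)
          simp [hc]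
      · rcases Nat.lt_or_ge r 2 with h | h
        · have hr1 : r = 1 := by omega
          subst hr1; rw [h2 (p + 1) (by omega)]; simp
        · rw [h3 r p h (by omega), ih r hr hp2, ih (r - 1) (by omega) hp2]
          have hr2 : r - 1 - 1 = r - 2 := by omega
          have hp1 : p + 1 - 2 = (p - 2) + 1 := by omega
          have hr1 : r - 1 = (r - 2) + 1 := by omega
          rw [hr2, hp1, hr1, Nat.choose_succ_succ]
          push_cast
          rw [pow_succ]
          ring
  refine ⟨fun r p hr hp => main p r hr hp, fun r p hp hpr => ?_⟩
  rw [main p r (by omega) hp, Nat.choose_eq_zero_of_lt (by omega)]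
  simp
end
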